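/- Let r be a holomorphic function on the open unit disk 𝔻 with Re r(z) ≥ 0 for all z ∈ 𝔻, and suppose r(z) = O((1-z)^2) as z tends nontangentially to 1. Then r(z) = 0 for all z ∈ 𝔻. -/

import Mathlib

noncomputable section

open Complex Filter

/-- The open unit disk in the complex plane. -/
def unitDisk : Set ℂ := {z : ℂ | ‖z‖ < 1}

/-- The Stolz region with parameter `K` at the boundary point `1`. -/
def stolzRegion (K : ℝ) : Set ℂ :=
  {z : ℂ | ‖z‖ < 1 ∧ ‖z - 1‖ < K * (1 - ‖z‖)}

/-- `f(z) = O((z-1)^m)` as `z` tends nontangentially to `1`. -/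
def NTBigO (f : ℂ → ℂ) (m : ℕ) : Prop :=
  ∀ K > (1 : ℝ), f =O[nhdsWithin 1 (stolzRegion K)] fun z => (z - 1) ^ m

/-!
Harnack's inequality, obtained from the Schwarz lemma applied to a Cayley transform of `r`, gives
`Re r(x) ≥ Re r(0) · (1 - x) / (1 + x)` on the radius `[0, 1)`, which lies in every Stolz region.
A decay `r(x) = O((1 - x)²)` therefore forces `Re r(0) = 0`. Then `Re r` attains its minimum at the
interior point `0`, so by the open mapping theorem `r` is constant, and the constant is `0` since
`r(x) → 0` as `x → 1`.
-/

open Metric Asymptotics Topology ComplexConjugate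

lemma unitDisk_eq_ball : unitDisk = ball (0 : ℂ) 1 := by
  ext z
  simp [unitDisk]

lemma ofReal_mem_ball_zero_one {x : ℝ} (hx : x ∈ Set.Ioo (0 : ℝ) 1) : (x : ℂ) ∈ ball (0 : ℂ) 1 := by
  simp [abs_of_pos hx.1, hx.2]

lemma norm_ofReal_sub_one {x : ℝ} (hx : x < 1) : ‖(x : ℂ) - 1‖ = 1 - x := by
  rw [← ofReal_one, ← ofReal_sub, norm_real, Real.norm_eq_abs, abs_of_neg (by linarith)]
  ring

lemma tendsto_ofReal_nhdsLT_stolzRegion {K : ℝ} (hK : 1 < K) :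
    Tendsto ((↑) : ℝ → ℂ) (𝓝[<] 1) (𝓝[stolzRegion K] 1) := by
  refine tendsto_nhdsWithin_iff.2 ⟨?_, ?_⟩
  · simpa using (continuous_ofReal.tendsto 1).mono_left nhdsWithin_le_nhds
  · filter_upwards [Ioo_mem_nhdsLT one_pos] with x hx
    refine ⟨mem_ball_zero_iff.1 (ofReal_mem_ball_zero_one hx), ?_⟩
    rw [norm_ofReal_sub_one hx.2, norm_real, Real.norm_of_nonneg hx.1.le]
    nlinarith [hx.2]

lemma tendsto_ofReal_sub_one_nhdsLT : Tendsto (fun x : ℝ => (x : ℂ) - 1) (𝓝[<] 1) (𝓝 0) := by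
  simpa using ((continuous_ofReal.tendsto 1).sub_const 1).mono_left nhdsWithin_le_nhds

lemma NTBigO.isBigO_ofReal {f : ℂ → ℂ} {m : ℕ} (h : NTBigO f m) :
    (fun x : ℝ => f x) =O[𝓝[<] 1] fun x : ℝ => ((x : ℂ) - 1) ^ m :=
  (h 2 one_lt_two).comp_tendsto (tendsto_ofReal_nhdsLT_stolzRegion one_lt_two)

lemma normSq_add_conj_eq (w b : ℂ) :
    normSq (w + conj b) = normSq (w - b) + 4 * b.re * w.re := by
  simp only [normSq_apply, add_re, add_im, sub_re, sub_im, conj_re, conj_im]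
  ring

theorem harnack_re_lower_bound {f : ℂ → ℂ} (hf : DifferentiableOn ℂ f (ball 0 1))
    (hre : ∀ z ∈ ball (0 : ℂ) 1, 0 ≤ (f z).re) {z : ℂ} (hz : ‖z‖ < 1) :
    (f 0).re * (1 - ‖z‖) ≤ (1 + ‖z‖) * (f z).re := by
  have hz_mem : z ∈ ball (0 : ℂ) 1 := mem_ball_zero_iff.2 hz
  rcases (hre 0 (mem_ball_self one_pos)).eq_or_lt with ha | ha
  · rw [← ha, zero_mul]
    exact mul_nonneg (by positivity) (hre z hz_mem)
  set b := f 0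
  have hden : ∀ w ∈ ball (0 : ℂ) 1, f w + conj b ≠ 0 := fun w hw h => by
    have := congrArg re h
    simp only [add_re, conj_re, zero_re] at this
    linarith [hre w hw]
  have hcayley : ∀ w ∈ ball (0 : ℂ) 1, ‖f w - b‖ ≤ ‖f w + conj b‖ := fun w hw => by
    rw [← sq_le_sq₀ (norm_nonneg _) (norm_nonneg _), Complex.sq_norm, Complex.sq_norm,
      normSq_add_conj_eq]
    nlinarith [hre w hw]
  -- The Cayley transform sending the right half-plane into the disk and `b` to `0`.
  set g : ℂ → ℂ := fun w => (f w - b) / (f w + conj b)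
  have hg_maps : Set.MapsTo g (ball 0 1) (closedBall 0 1) := fun w hw => by
    simpa [g, norm_div] using div_le_one_of_le₀ (hcayley w hw) (norm_nonneg _)
  have hg : DifferentiableOn ℂ g (ball 0 1) :=
    (hf.sub_const b).div (hf.add_const _) hden
  have hschwarz :=
    norm_le_norm_of_mapsTo_ball hg hg_maps (div_eq_zero_iff.2 (.inl (sub_self b))) hz
  rw [norm_div, div_le_iff₀ (norm_pos_iff.2 (hden z hz_mem))] at hschwarz
  have hsq : normSq (f z - b) ≤ ‖z‖ ^ 2 * normSq (f z + conj b) := by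
    rw [← Complex.sq_norm, ← Complex.sq_norm, ← mul_pow]
    exact pow_le_pow_left₀ (norm_nonneg _) hschwarz 2
  simp only [normSq_apply, add_re, add_im, sub_re, sub_im, conj_re, conj_im] at hsq
  have hre_sq : ((f z).re - b.re) ^ 2 ≤ (‖z‖ * ((f z).re + b.re)) ^ 2 := by
    nlinarith [mul_nonneg (sub_nonneg.2 (pow_le_one₀ (n := 2) (norm_nonneg z) hz.le))
      (sq_nonneg ((f z).im - b.im))]
  have hsum_nonneg : 0 ≤ ‖z‖ * ((f z).re + b.re) :=
    mul_nonneg (norm_nonneg z) (add_nonneg (hre z hz_mem) ha.le)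
  linarith [(abs_le_of_sq_le_sq' hre_sq hsum_nonneg).1]

theorem AnalyticOnNhd.eqOn_of_isMinOn_re {f : ℂ → ℂ} {U : Set ℂ} {z₀ : ℂ}
    (hf : AnalyticOnNhd ℂ f U) (hU : IsPreconnected U) (hU_open : IsOpen U) (hz₀ : z₀ ∈ U)
    (hmin : IsMinOn (fun z => (f z).re) U z₀) : ∀ z ∈ U, f z = f z₀ := by
  rcases hf.is_constant_or_isOpen hU with ⟨w, hw⟩ | hopen
  · exact fun z hz => (hw z hz).trans (hw z₀ hz₀).symm
  obtain ⟨ε, hε, hball⟩ := Metric.isOpen_iff.1 (hopen U subset_rfl hU_open) (f z₀) ⟨z₀, hz₀, rfl⟩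
  obtain ⟨z, hz, hfz⟩ := hball (show f z₀ - (ε / 2 : ℝ) ∈ ball (f z₀) ε by
    simp [abs_of_pos hε, hε])
  have : (f z₀).re ≤ (f z).re := hmin hz
  rw [hfz, sub_re, ofReal_re] at this
  linarith

theorem re_apply_zero_eq_zero_of_isBigO_sq {f : ℂ → ℂ} (hf : DifferentiableOn ℂ f (ball 0 1))
    (hre : ∀ z ∈ ball (0 : ℂ) 1, 0 ≤ (f z).re)
    (hO : (fun x : ℝ => f x) =O[𝓝[<] 1] fun x : ℝ => ((x : ℂ) - 1) ^ 2) : (f 0).re = 0 := by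
  by_contra ha_ne
  have ha : 0 < (f 0).re := (hre 0 (mem_ball_self one_pos)).lt_of_ne' ha_ne
  have hlinear : (fun x : ℝ => (x : ℂ) - 1) =O[𝓝[<] 1] fun x : ℝ => f x := by
    refine IsBigO.of_bound (2 / (f 0).re) ?_
    filter_upwards [Ioo_mem_nhdsLT one_pos] with x hx
    have hx_norm : ‖(x : ℂ)‖ = x := by simp [abs_of_pos hx.1]
    have hharnack := harnack_re_lower_bound hf hre (z := x) (by rw [hx_norm]; exact hx.2)
    rw [hx_norm] at hharnack
    rw [norm_ofReal_sub_one hx.2, div_mul_eq_mul_div, le_div_iff₀ ha]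
    nlinarith [re_le_norm (f x), hre x (ofReal_mem_ball_zero_one hx)]
  have hquadratic : (fun x : ℝ => ((x : ℂ) - 1) ^ 2) =o[𝓝[<] 1] fun x : ℝ => (x : ℂ) - 1 := by
    simpa [Function.comp_def] using
      (isLittleO_pow_pow (𝕜 := ℂ) one_lt_two).comp_tendsto tendsto_ofReal_sub_one_nhdsLT
  have hne : ∀ᶠ x : ℝ in 𝓝[<] 1, (x : ℂ) - 1 ≠ 0 := by
    filter_upwards [self_mem_nhdsWithin] with x hx
    exact sub_ne_zero.2 (by exact_mod_cast hx.ne)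
  exact isLittleO_irrefl hne.frequently (hlinear.trans_isLittleO (hO.trans_isLittleO hquadratic))

theorem herglotz_rigidity (r : ℂ → ℂ)
    (hr : DifferentiableOn ℂ r unitDisk)
    (hre : ∀ z ∈ unitDisk, 0 ≤ (r z).re)
    (hO : NTBigO r 2) :
    ∀ z ∈ unitDisk, r z = 0 := by
  rw [unitDisk_eq_ball] at hr hre ⊢
  have hradial := hO.isBigO_ofReal
  have hre0 : (r 0).re = 0 := re_apply_zero_eq_zero_of_isBigO_sq hr hre hradial
  have hconst : ∀ z ∈ ball (0 : ℂ) 1, r z = r 0 :=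
    (hr.analyticOnNhd isOpen_ball).eqOn_of_isMinOn_re (convex_ball 0 1).isPreconnected isOpen_ball
      (mem_ball_self one_pos) fun z hz => by simpa [hre0] using hre z hz
  have hr0 : r 0 = 0 := by
    have hlim : Tendsto (fun x : ℝ => r x) (𝓝[<] 1) (𝓝 0) :=
      hradial.trans_tendsto (by simpa using tendsto_ofReal_sub_one_nhdsLT.pow 2)
    refine tendsto_nhds_unique (tendsto_const_nhds.congr' ?_) hlim
    filter_upwards [Ioo_mem_nhdsLT one_pos] with x hx
    exact (hconst x (ofReal_mem_ball_zero_one hx)).symm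
  exact fun z hz => (hconst z hz).trans hr0
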